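/- For every positive integer n, there is an injective group homomorphism from G_1(SK) = ⟨B, D, E | B D B = D B D, E D E = D E D⟩ into G_n(SK) sending B to b^n, D to d^n, and E to e^n; in particular, the subgroup of G_n(SK) generated by b^n, d^n, e^n is isomorphic to G_1(SK). -/

import Mathlib

/-- Relators of G₁(SK) = ⟨B, D, E | B D B = D B D, E D E = D E D⟩, with B, D, E = 0, 1, 2. -/
def G1SKRels : Set (FreeGroup (Fin 3)) :=
  let B : FreeGroup (Fin 3) := FreeGroup.of 0
  let D : FreeGroup (Fin 3) := FreeGroup.of 1
  let E : FreeGroup (Fin 3) := FreeGroup.of 2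
  {B * D * B * (D * B * D)⁻¹,
   E * D * E * (D * E * D)⁻¹}

/-- The knot group of the square knot. -/
abbrev G1SK := PresentedGroup G1SKRels

/-- Relators of the n-th generalized knot group of the square knot:
⟨b, d, e | b dⁿ bⁿ = dⁿ bⁿ d, e dⁿ eⁿ = dⁿ eⁿ d, eⁿ dⁿ e d⁻ⁿ e⁻ⁿ = bⁿ dⁿ b d⁻ⁿ b⁻ⁿ⟩,
with b, d, e = 0, 1, 2. -/
def GnSKRels (n : ℕ) : Set (FreeGroup (Fin 3)) :=
  let b : FreeGroup (Fin 3) := FreeGroup.of 0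
  let d : FreeGroup (Fin 3) := FreeGroup.of 1
  let e : FreeGroup (Fin 3) := FreeGroup.of 2
  {b * d ^ n * b ^ n * (d ^ n * b ^ n * d)⁻¹,
   e * d ^ n * e ^ n * (d ^ n * e ^ n * d)⁻¹,
   e ^ n * d ^ n * e * (d ^ n)⁻¹ * (e ^ n)⁻¹ * (b ^ n * d ^ n * b * (d ^ n)⁻¹ * (b ^ n)⁻¹)⁻¹}

/-- The n-th generalized knot group of the square knot. -/
abbrev GnSK (n : ℕ) := PresentedGroup (GnSKRels n)

namespace SKAux

lemma mk_rel_eq_one {α : Type*} {rels : Set (FreeGroup α)} {r : FreeGroup α} (h : r ∈ rels) :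
    PresentedGroup.mk rels r = 1 :=
  (QuotientGroup.eq_one_iff _).mpr (Subgroup.subset_normalClosure h)

def B1 : G1SK := PresentedGroup.of 0
def D1 : G1SK := PresentedGroup.of 1
def E1 : G1SK := PresentedGroup.of 2

lemma relB : B1 * D1 * B1 = D1 * B1 * D1 := by
  have h := mk_rel_eq_one (rels := G1SKRels)
    (r := FreeGroup.of 0 * FreeGroup.of 1 * FreeGroup.of 0 *
      (FreeGroup.of 1 * FreeGroup.of 0 * FreeGroup.of 1)⁻¹) (by simp [G1SKRels])
  simp only [_root_.map_mul, _root_.map_inv, mul_inv_eq_one] at h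
  exact h

lemma relE : E1 * D1 * E1 = D1 * E1 * D1 := by
  have h := mk_rel_eq_one (rels := G1SKRels)
    (r := FreeGroup.of 2 * FreeGroup.of 1 * FreeGroup.of 2 *
      (FreeGroup.of 1 * FreeGroup.of 2 * FreeGroup.of 1)⁻¹) (by simp [G1SKRels])
  simp only [_root_.map_mul, _root_.map_inv, mul_inv_eq_one] at h
  exact h

lemma g1B : (D1 * B1) * D1 * (D1 * B1)⁻¹ = B1 := by
  rw [mul_inv_eq_iff_eq_mul]; simp only [← mul_assoc]; exact relB.symm

lemma g1E : (D1 * E1) * D1 * (D1 * E1)⁻¹ = E1 := by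
  rw [mul_inv_eq_iff_eq_mul]; simp only [← mul_assoc]; exact relE.symm

lemma commB : Commute D1 (B1 * D1 ^ 2 * B1) := by
  unfold Commute SemiconjBy
  calc D1 * (B1 * D1 ^ 2 * B1) = (D1 * B1 * D1) * (D1 * B1) := by simp only [pow_two, mul_assoc]
    _ = (B1 * D1 * B1) * (D1 * B1) := by rw [relB]
    _ = (B1 * D1) * (B1 * D1 * B1) := by simp only [pow_two, mul_assoc]
    _ = (B1 * D1) * (D1 * B1 * D1) := by rw [relB]
    _ = (B1 * D1 ^ 2 * B1) * D1 := by simp only [pow_two, mul_assoc]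

lemma commE : Commute D1 (E1 * D1 ^ 2 * E1) := by
  unfold Commute SemiconjBy
  calc D1 * (E1 * D1 ^ 2 * E1) = (D1 * E1 * D1) * (D1 * E1) := by simp only [pow_two, mul_assoc]
    _ = (E1 * D1 * E1) * (D1 * E1) := by rw [relE]
    _ = (E1 * D1) * (E1 * D1 * E1) := by simp only [pow_two, mul_assoc]
    _ = (E1 * D1) * (D1 * E1 * D1) := by rw [relE]
    _ = (E1 * D1 ^ 2 * E1) * D1 := by simp only [pow_two, mul_assoc]

def zG1 : G1SK := (B1 * D1 ^ 2 * B1)⁻¹ * (E1 * D1 ^ 2 * E1)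

lemma commZ : Commute D1 zG1 := (commB.inv_right).mul_right commE

/-! matrix representation -/

abbrev M2 := Matrix (Fin 2) (Fin 2) ℤ

def s1 : M2ˣ := ⟨!![1,1;0,1], !![1,-1;0,1],
  by rw [Matrix.mul_fin_two, Matrix.one_fin_two]; norm_num,
  by rw [Matrix.mul_fin_two, Matrix.one_fin_two]; norm_num⟩

def s2 : M2ˣ := ⟨!![1,0;-1,1], !![1,0;1,1],
  by rw [Matrix.mul_fin_two, Matrix.one_fin_two]; norm_num,
  by rw [Matrix.mul_fin_two, Matrix.one_fin_two]; norm_num⟩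

lemma braid_s : s1 * s2 * s1 = s2 * s1 * s2 := by
  ext : 1
  show (s1 : M2) * s2 * s1 = s2 * s1 * s2
  simp only [s1, s2, Units.val_mk, Matrix.mul_fin_two]
  norm_num

def ν : Multiplicative ℤ →* M2ˣ :=
  MonoidHom.mk'
    (fun m => ⟨!![1,0;12 * m.toAdd,1], !![1,0;-12 * m.toAdd,1],
      by rw [Matrix.mul_fin_two, Matrix.one_fin_two]; ring_nf,
      by rw [Matrix.mul_fin_two, Matrix.one_fin_two]; ring_nf⟩)
    (by
      intro a b
      ext : 1
      show (!![1,0;12 * (a.toAdd + b.toAdd),1] : M2) = !![1,0;12 * a.toAdd,1] * !![1,0;12 * b.toAdd,1]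
      rw [Matrix.mul_fin_two]; ring_nf)

lemma nu_eq_one {j : ℤ} (h : ν (Multiplicative.ofAdd 1 ^ j) = 1) : j = 0 := by
  have h1 : (ν (Multiplicative.ofAdd 1 ^ j) : M2) = ((1 : M2ˣ) : M2) := congrArg Units.val h
  have h2 : (ν (Multiplicative.ofAdd 1 ^ j) : M2) 1 0 = ((1 : M2ˣ) : M2) 1 0 := by rw [h1]
  simp only [ν, MonoidHom.mk'_apply, Units.val_mk, Units.val_one, Matrix.one_fin_two] at h2
  simp only [toAdd_zpow, toAdd_ofAdd, smul_eq_mul, mul_one] at h2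
  have : (12 : ℤ) * j = 0 := by simpa using h2
  omega

lemma key_sq : ((s2 ^ 4)⁻¹ * (s1 * s2 ^ 2 * s1)) ^ 2 = ν (Multiplicative.ofAdd 1) := by
  have hs2i : ((s2⁻¹ : M2ˣ) : M2) = !![1,0;1,1] := rfl
  ext : 1
  show ((((s2 ^ 4)⁻¹ * (s1 * s2 ^ 2 * s1)) ^ 2 : M2ˣ) : M2) = _
  rw [show ((s2:M2ˣ) ^ 4)⁻¹ = (s2⁻¹)^4 by group]
  simp only [Units.val_pow_eq_pow_val, Units.val_mul, hs2i, pow_two,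
    show ((s1 : M2ˣ) : M2) = !![1,1;0,1] from rfl, show ((s2 : M2ˣ) : M2) = !![1,0;-1,1] from rfl,
    ν, MonoidHom.mk'_apply, Units.val_mk, toAdd_ofAdd]
  simp only [pow_succ, pow_zero, one_mul, Matrix.mul_fin_two]
  norm_num

def ρf : Fin 3 → M2ˣ × M2ˣ := ![(s1, s2), (s2, s2), (s2, s1)]

lemma ρrels : ∀ r ∈ G1SKRels, FreeGroup.lift ρf r = 1 := by
  intro r hr
  simp only [G1SKRels, Set.mem_insert_iff, Set.mem_singleton_iff] at hr
  rcases hr with rfl | rfl <;>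
  · simp only [_root_.map_mul, _root_.map_inv, FreeGroup.lift_apply_of, ρf]
    simp only [Matrix.cons_val_zero, Matrix.cons_val_one, Matrix.head_cons, Matrix.cons_val_two,
      Matrix.tail_cons]
    rw [mul_inv_eq_one]
    refine Prod.ext ?_ ?_ <;> simp [braid_s]

def ρ : G1SK →* M2ˣ × M2ˣ := PresentedGroup.toGroup ρrels

def α : G1SK →* Multiplicative ℤ := PresentedGroup.toGroup (f := fun _ => Multiplicative.ofAdd 1)
  (by
    intro r hr
    simp only [G1SKRels, Set.mem_insert_iff, Set.mem_singleton_iff] at hr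
    rcases hr with rfl | rfl <;>
    · simp only [_root_.map_mul, _root_.map_inv, FreeGroup.lift_apply_of]
      group)

/-! the base homomorphism -/

abbrev K := Multiplicative (ℤ × ℤ)

def φf : K →* G1SK :=
  MonoidHom.mk' (fun p => D1 ^ (p.toAdd.1) * zG1 ^ (p.toAdd.2))
    (by
      intro p q
      have h := (commZ.zpow_zpow q.toAdd.1 p.toAdd.2).eq
      show D1 ^ ((p*q).toAdd.1) * zG1 ^ ((p*q).toAdd.2) = _
      calc D1 ^ ((p*q).toAdd.1) * zG1 ^ ((p*q).toAdd.2)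
          = D1 ^ p.toAdd.1 * ((D1 ^ q.toAdd.1 * zG1 ^ p.toAdd.2) * zG1 ^ q.toAdd.2) := by
            rw [show (p*q).toAdd = p.toAdd + q.toAdd from rfl, Prod.fst_add, Prod.snd_add,
              _root_.zpow_add, _root_.zpow_add]
            simp only [mul_assoc]
        _ = D1 ^ p.toAdd.1 * ((zG1 ^ p.toAdd.2 * D1 ^ q.toAdd.1) * zG1 ^ q.toAdd.2) := by rw [h]
        _ = _ := by simp only [mul_assoc])

lemma αD : α D1 = Multiplicative.ofAdd 1 := PresentedGroup.toGroup.of _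
lemma αz : α zG1 = 1 := by
  simp only [zG1, _root_.map_mul, _root_.map_inv, map_pow, B1, D1, E1, α,
    PresentedGroup.toGroup.of]
  group

def ρ₂ : G1SK →* M2ˣ := (MonoidHom.snd _ _).comp ρ

lemma ρ₂z : ρ₂ zG1 = (s2 ^ 4)⁻¹ * (s1 * s2 ^ 2 * s1) := by
  simp only [ρ₂, ρ, MonoidHom.coe_comp, Function.comp_apply, MonoidHom.coe_snd, zG1,
    _root_.map_mul, _root_.map_inv, map_pow, B1, D1, E1, PresentedGroup.toGroup.of, ρf]
  simp only [Matrix.cons_val_zero, Matrix.cons_val_one, Matrix.head_cons, Matrix.cons_val_two,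
    Matrix.tail_cons]
  rw [show (s2 : M2ˣ) * s2 ^ 2 * s2 = s2 ^ 4 by group]

lemma φf_inj : Function.Injective φf := by
  rw [injective_iff_map_eq_one]
  intro p hp
  have hp' : D1 ^ (p.toAdd.1) * zG1 ^ (p.toAdd.2) = 1 := hp
  have hi : p.toAdd.1 = 0 := by
    have h := congrArg α hp'
    simp only [_root_.map_mul, map_zpow, αD, αz, _root_.map_one, _root_.one_zpow, mul_one] at h
    have := congrArg Multiplicative.toAdd h
    simpa using this
  have hz : zG1 ^ (p.toAdd.2) = 1 := by
    rw [hi] at hp'; simpa using hp'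
  have hj : p.toAdd.2 = 0 := by
    have h : ρ₂ zG1 ^ (p.toAdd.2) = 1 := by
      rw [← map_zpow, hz, _root_.map_one]
    have h2 : (ρ₂ zG1 ^ (2:ℕ)) ^ (p.toAdd.2) = 1 := by
      rw [← zpow_natCast (ρ₂ zG1) 2, ← _root_.zpow_mul, mul_comm, _root_.zpow_mul, h, _root_.one_zpow]
    rw [ρ₂z, key_sq, ← map_zpow] at h2
    exact nu_eq_one h2
  rw [← ofAdd_toAdd p, show p.toAdd = 0 from Prod.ext hi hj, ofAdd_zero]


section GnSide
variable (n : ℕ)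

def bb : GnSK n := PresentedGroup.of 0
def dd : GnSK n := PresentedGroup.of 1
def ee : GnSK n := PresentedGroup.of 2

variable {n}

lemma rel1 : bb n * dd n ^ n * bb n ^ n = dd n ^ n * bb n ^ n * dd n := by
  have h := mk_rel_eq_one (rels := GnSKRels n)
    (r := FreeGroup.of 0 * FreeGroup.of 1 ^ n * FreeGroup.of 0 ^ n *
      (FreeGroup.of 1 ^ n * FreeGroup.of 0 ^ n * FreeGroup.of 1)⁻¹) (by simp [GnSKRels])
  simp only [_root_.map_mul, _root_.map_inv, map_pow, mul_inv_eq_one] at h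
  exact h

lemma rel2 : ee n * dd n ^ n * ee n ^ n = dd n ^ n * ee n ^ n * dd n := by
  have h := mk_rel_eq_one (rels := GnSKRels n)
    (r := FreeGroup.of 2 * FreeGroup.of 1 ^ n * FreeGroup.of 2 ^ n *
      (FreeGroup.of 1 ^ n * FreeGroup.of 2 ^ n * FreeGroup.of 1)⁻¹) (by simp [GnSKRels])
  simp only [_root_.map_mul, _root_.map_inv, map_pow, mul_inv_eq_one] at h
  exact h

lemma rel3 : ee n ^ n * dd n ^ n * ee n * (dd n ^ n)⁻¹ * (ee n ^ n)⁻¹ =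
    bb n ^ n * dd n ^ n * bb n * (dd n ^ n)⁻¹ * (bb n ^ n)⁻¹ := by
  have h := mk_rel_eq_one (rels := GnSKRels n)
    (r := FreeGroup.of 2 ^ n * FreeGroup.of 1 ^ n * FreeGroup.of 2 * (FreeGroup.of 1 ^ n)⁻¹ *
      (FreeGroup.of 2 ^ n)⁻¹ *
      (FreeGroup.of 0 ^ n * FreeGroup.of 1 ^ n * FreeGroup.of 0 * (FreeGroup.of 1 ^ n)⁻¹ *
        (FreeGroup.of 0 ^ n)⁻¹)⁻¹)
    (by simp [GnSKRels])
  simp only [_root_.map_mul, _root_.map_inv, map_pow, mul_inv_eq_one] at h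
  exact h

lemma scB : SemiconjBy (dd n ^ n * bb n ^ n) (dd n) (bb n) := by
  unfold SemiconjBy
  simp only [← mul_assoc]
  exact rel1.symm

lemma scE : SemiconjBy (dd n ^ n * ee n ^ n) (dd n) (ee n) := by
  unfold SemiconjBy
  simp only [← mul_assoc]
  exact rel2.symm

lemma mainB : bb n ^ n * dd n ^ n * bb n ^ n = dd n ^ n * bb n ^ n * dd n ^ n := by
  have h := (scB (n := n)).pow_right n
  unfold SemiconjBy at h
  simp only [← mul_assoc] at h
  exact h.symm

lemma mainE : ee n ^ n * dd n ^ n * ee n ^ n = dd n ^ n * ee n ^ n * dd n ^ n := by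
  have h := (scE (n := n)).pow_right n
  unfold SemiconjBy at h
  simp only [← mul_assoc] at h
  exact h.symm

lemma conjB : (dd n ^ n * bb n ^ n) * dd n * (dd n ^ n * bb n ^ n)⁻¹ = bb n := by
  rw [(scB (n := n)).eq, mul_inv_cancel_right]

lemma conjE : (dd n ^ n * ee n ^ n) * dd n * (dd n ^ n * ee n ^ n)⁻¹ = ee n := by
  rw [(scE (n := n)).eq, mul_inv_cancel_right]

def zGn : GnSK n :=
  (bb n ^ n * (dd n ^ n) ^ 2 * bb n ^ n)⁻¹ * (ee n ^ n * (dd n ^ n) ^ 2 * ee n ^ n)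

lemma commZn : Commute (dd n) (zGn (n := n)) := by
  have h3 := rel3 (n := n)
  rw [show bb n ^ n * dd n ^ n * bb n * (dd n ^ n)⁻¹ * (bb n ^ n)⁻¹ =
      bb n ^ n * dd n ^ n * ((dd n ^ n * bb n ^ n) * dd n * (dd n ^ n * bb n ^ n)⁻¹) *
        (dd n ^ n)⁻¹ * (bb n ^ n)⁻¹ by rw [conjB],
    show ee n ^ n * dd n ^ n * ee n * (dd n ^ n)⁻¹ * (ee n ^ n)⁻¹ =
      ee n ^ n * dd n ^ n * ((dd n ^ n * ee n ^ n) * dd n * (dd n ^ n * ee n ^ n)⁻¹) *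
        (dd n ^ n)⁻¹ * (ee n ^ n)⁻¹ by rw [conjE]] at h3
  have h3' : (ee n ^ n * (dd n ^ n) ^ 2 * ee n ^ n) * dd n *
      (ee n ^ n * (dd n ^ n) ^ 2 * ee n ^ n)⁻¹ =
      (bb n ^ n * (dd n ^ n) ^ 2 * bb n ^ n) * dd n *
      (bb n ^ n * (dd n ^ n) ^ 2 * bb n ^ n)⁻¹ := by
    calc (ee n ^ n * (dd n ^ n) ^ 2 * ee n ^ n) * dd n *
        (ee n ^ n * (dd n ^ n) ^ 2 * ee n ^ n)⁻¹
        = ee n ^ n * dd n ^ n * ((dd n ^ n * ee n ^ n) * dd n * (dd n ^ n * ee n ^ n)⁻¹) *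
          (dd n ^ n)⁻¹ * (ee n ^ n)⁻¹ := by
          simp only [pow_two, _root_.mul_inv_rev, mul_assoc]
      _ = bb n ^ n * dd n ^ n * ((dd n ^ n * bb n ^ n) * dd n * (dd n ^ n * bb n ^ n)⁻¹) *
          (dd n ^ n)⁻¹ * (bb n ^ n)⁻¹ := h3
      _ = (bb n ^ n * (dd n ^ n) ^ 2 * bb n ^ n) * dd n *
          (bb n ^ n * (dd n ^ n) ^ 2 * bb n ^ n)⁻¹ := by
          simp only [pow_two, _root_.mul_inv_rev, mul_assoc]
  unfold Commute SemiconjBy zGn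
  set X := bb n ^ n * (dd n ^ n) ^ 2 * bb n ^ n
  set Y := ee n ^ n * (dd n ^ n) ^ 2 * ee n ^ n
  have : dd n * (X⁻¹ * Y) = X⁻¹ * (X * dd n * X⁻¹) * Y := by simp only [mul_assoc]; group
  rw [this, ← h3']
  simp only [mul_assoc]
  group

end GnSide

/-! ## The pushout -/

open Monoid

def Gfam : Bool → Type := fun i => match i with
  | false => G1SK
  | true => K

instance GfamGroup : (i : Bool) → Group (Gfam i) := fun i => match i with
  | false => inferInstanceAs (Group G1SK)
  | true => inferInstanceAs (Group K)

variable (n : ℕ)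

def φt : K →* K :=
  MonoidHom.mk' (fun p => Multiplicative.ofAdd ((n:ℤ) * p.toAdd.1, p.toAdd.2))
    (by
      intro p q
      have h : ((n:ℤ) * (p.toAdd + q.toAdd).1, (p.toAdd + q.toAdd).2) =
          ((n:ℤ) * p.toAdd.1, p.toAdd.2) + ((n:ℤ) * q.toAdd.1, q.toAdd.2) := by
        simp [Prod.ext_iff, mul_add]
      show Multiplicative.ofAdd ((n:ℤ) * (p.toAdd + q.toAdd).1, (p.toAdd + q.toAdd).2) = _
      rw [h, ofAdd_add])

lemma φt_inj (hn : 0 < n) : Function.Injective (φt n) := by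
  rw [injective_iff_map_eq_one]
  intro p hp
  have h : ((n:ℤ) * p.toAdd.1, p.toAdd.2) = ((0:ℤ), (0:ℤ)) := by
    have := congrArg Multiplicative.toAdd hp
    simpa [φt] using this
  rw [Prod.ext_iff] at h
  have h1 : p.toAdd.1 = 0 := by
    rcases mul_eq_zero.mp h.1 with h' | h'
    · exact absurd h' (by positivity)
    · exact h'
  rw [← ofAdd_toAdd p, show p.toAdd = 0 from Prod.ext h1 h.2, ofAdd_zero]

def φP : ∀ i : Bool, K →* Gfam i := fun i => match i with
  | false => φf
  | true => φt n

def Hp := PushoutI (φP n)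

instance : Group (Hp n) := inferInstanceAs (Group (PushoutI (φP n)))

def J : G1SK →* Hp n := PushoutI.of (φ := φP n) false
def T : K →* Hp n := PushoutI.of (φ := φP n) true

def δ : Hp n := T n (Multiplicative.ofAdd (1, 0))
def ζ : Hp n := T n (Multiplicative.ofAdd (0, 1))

lemma commδζ : Commute (δ n) (ζ n) := (Commute.all _ _).map (T n)

lemma φf_D : φf (Multiplicative.ofAdd (1, 0)) = D1 := by
  show D1 ^ (1:ℤ) * zG1 ^ (0:ℤ) = D1
  simp

lemma φf_z : φf (Multiplicative.ofAdd (0, 1)) = zG1 := by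
  show D1 ^ (0:ℤ) * zG1 ^ (1:ℤ) = zG1
  simp

lemma baseJT (x : K) : J n (φf x) = T n (φt n x) :=
  (PushoutI.of_apply_eq_base (φP n) false x).trans
    (PushoutI.of_apply_eq_base (φP n) true x).symm

lemma JD : J n D1 = δ n ^ n := by
  rw [← φf_D, baseJT]
  unfold δ
  rw [← map_pow, ← ofAdd_nsmul]
  have h : φt n (Multiplicative.ofAdd (1, 0)) =
      Multiplicative.ofAdd (n • ((1:ℤ), (0:ℤ))) := by
    show Multiplicative.ofAdd ((n:ℤ) * 1, (0:ℤ)) = _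
    rw [show n • ((1:ℤ), (0:ℤ)) = ((n:ℤ) * 1, (0:ℤ)) by simp [Prod.ext_iff]]
  rw [h]

lemma Jz : J n zG1 = ζ n := by
  rw [← φf_z, baseJT]
  unfold ζ
  have h : φt n (Multiplicative.ofAdd (0, 1)) = Multiplicative.ofAdd ((0:ℤ), (1:ℤ)) := by
    show Multiplicative.ofAdd ((n:ℤ) * 0, (1:ℤ)) = _
    rw [show ((n:ℤ) * 0, (1:ℤ)) = ((0:ℤ), (1:ℤ)) by simp]
  rw [h]

/-! the map Ψ : Hp n → GnSK n -/

def θ : G1SK →* GnSK n :=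
  PresentedGroup.toGroup (f := ![bb n ^ n, dd n ^ n, ee n ^ n])
    (by
      intro r hr
      simp only [G1SKRels, Set.mem_insert_iff, Set.mem_singleton_iff] at hr
      rcases hr with rfl | rfl <;>
      · simp only [_root_.map_mul, _root_.map_inv, FreeGroup.lift_apply_of, Matrix.cons_val_zero,
          Matrix.cons_val_one, Matrix.head_cons, Matrix.cons_val_two, Matrix.tail_cons,
          mul_inv_eq_one]
        first
        | exact mainB
        | exact mainE)

lemma θB : θ n B1 = bb n ^ n := PresentedGroup.toGroup.of _
lemma θD : θ n D1 = dd n ^ n := PresentedGroup.toGroup.of _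
lemma θE : θ n E1 = ee n ^ n := PresentedGroup.toGroup.of _

lemma θz : θ n zG1 = zGn (n := n) := by
  simp only [zG1, _root_.map_mul, _root_.map_inv, map_pow, θB, θD, θE, zGn]

def κ : K →* GnSK n :=
  MonoidHom.mk' (fun p => dd n ^ (p.toAdd.1) * zGn (n := n) ^ (p.toAdd.2))
    (by
      intro p q
      have h := ((commZn (n := n)).zpow_zpow q.toAdd.1 p.toAdd.2).eq
      calc dd n ^ ((p*q).toAdd.1) * zGn (n := n) ^ ((p*q).toAdd.2)
          = dd n ^ p.toAdd.1 * ((dd n ^ q.toAdd.1 * zGn (n := n) ^ p.toAdd.2) *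
            zGn (n := n) ^ q.toAdd.2) := by
            rw [show (p*q).toAdd = p.toAdd + q.toAdd from rfl, Prod.fst_add, Prod.snd_add,
              _root_.zpow_add, _root_.zpow_add]
            simp only [mul_assoc]
        _ = dd n ^ p.toAdd.1 * ((zGn (n := n) ^ p.toAdd.2 * dd n ^ q.toAdd.1) *
            zGn (n := n) ^ q.toAdd.2) := by rw [h]
        _ = _ := by simp only [mul_assoc])

lemma θφf_eq_κφt : (θ n).comp φf = (κ n).comp (φt n) := by
  refine MonoidHom.ext fun (p : K) => ?_
  show θ n (D1 ^ (p.toAdd.1) * zG1 ^ (p.toAdd.2)) =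
    dd n ^ ((φt n p).toAdd.1) * zGn (n := n) ^ ((φt n p).toAdd.2)
  rw [_root_.map_mul, map_zpow, map_zpow, θD, θz]
  show (dd n ^ n) ^ p.toAdd.1 * zGn (n := n) ^ p.toAdd.2 =
    dd n ^ ((n:ℤ) * p.toAdd.1) * zGn (n := n) ^ p.toAdd.2
  rw [← zpow_natCast (dd n) n, ← _root_.zpow_mul]

def Ψ : Hp n →* GnSK n :=
  PushoutI.lift
    (fun i => match i with
      | false => θ n
      | true => κ n)
    ((κ n).comp (φt n))
    (by
      intro i
      match i with
      | false => exact θφf_eq_κφt n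
      | true => rfl)

lemma ΨJ (g : G1SK) : Ψ n (J n g) = θ n g := PushoutI.lift_of _ _ _ _

lemma ΨT (p : K) : Ψ n (T n p) = κ n p := PushoutI.lift_of _ _ _ _

lemma Ψδ : Ψ n (δ n) = dd n := by
  rw [δ, ΨT]
  show dd n ^ (1:ℤ) * zGn (n := n) ^ (0:ℤ) = dd n
  simp


/-! ## the map Φ : GnSK n → Hp n -/

def u : Hp n := J n (D1 * B1)
def v : Hp n := J n (D1 * E1)

lemma conj_pow {G : Type*} [Group G] (a x : G) (k : ℕ) :
    (a * x * a⁻¹) ^ k = a * x ^ k * a⁻¹ := by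
  rw [← MulAut.conj_apply, ← map_pow, MulAut.conj_apply]

lemma keyu : J n D1 * J n B1 = u n := by rw [u, _root_.map_mul]

lemma keyv : J n D1 * J n E1 = v n := by rw [v, _root_.map_mul]

lemma x0n : (u n * δ n * (u n)⁻¹) ^ n = J n B1 := by
  rw [conj_pow, ← JD, u, ← _root_.map_inv, ← _root_.map_mul, ← _root_.map_mul, g1B]

lemma x2n : (v n * δ n * (v n)⁻¹) ^ n = J n E1 := by
  rw [conj_pow, ← JD, v, ← _root_.map_inv, ← _root_.map_mul, ← _root_.map_mul, g1E]

lemma main1 : (u n * δ n * (u n)⁻¹) * (δ n) ^ n * (u n * δ n * (u n)⁻¹) ^ n =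
    (δ n) ^ n * (u n * δ n * (u n)⁻¹) ^ n * δ n := by
  rw [x0n, ← JD]
  calc u n * δ n * (u n)⁻¹ * J n D1 * J n B1
      = u n * δ n * ((u n)⁻¹ * (J n D1 * J n B1)) := by simp only [mul_assoc]
    _ = u n * δ n * ((u n)⁻¹ * u n) := by rw [keyu]
    _ = u n * δ n := by rw [inv_mul_cancel, mul_one]
    _ = J n D1 * J n B1 * δ n := by rw [keyu]

lemma main2 : (v n * δ n * (v n)⁻¹) * (δ n) ^ n * (v n * δ n * (v n)⁻¹) ^ n =
    (δ n) ^ n * (v n * δ n * (v n)⁻¹) ^ n * δ n := by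
  rw [x2n, ← JD]
  calc v n * δ n * (v n)⁻¹ * J n D1 * J n E1
      = v n * δ n * ((v n)⁻¹ * (J n D1 * J n E1)) := by simp only [mul_assoc]
    _ = v n * δ n * ((v n)⁻¹ * v n) := by rw [keyv]
    _ = v n * δ n := by rw [inv_mul_cancel, mul_one]
    _ = J n D1 * J n E1 * δ n := by rw [keyv]

lemma hXf : J n B1 * J n D1 * u n = J n (B1 * D1 ^ 2 * B1) := by
  rw [u, ← _root_.map_mul, ← _root_.map_mul]
  exact congrArg (J n) (by simp only [pow_two, mul_assoc])

lemma hYf : J n E1 * J n D1 * v n = J n (E1 * D1 ^ 2 * E1) := by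
  rw [v, ← _root_.map_mul, ← _root_.map_mul]
  exact congrArg (J n) (by simp only [pow_two, mul_assoc])

lemma hXz : J n (E1 * D1 ^ 2 * E1) = J n (B1 * D1 ^ 2 * B1) * ζ n := by
  rw [← Jz, ← _root_.map_mul]
  exact congrArg (J n) (by rw [zG1, mul_inv_cancel_left])

lemma hcommζ : ζ n * δ n * (ζ n)⁻¹ = δ n := by
  rw [← (commδζ n).eq, mul_inv_cancel_right]

lemma main3 : (v n * δ n * (v n)⁻¹) ^ n * (δ n) ^ n * (v n * δ n * (v n)⁻¹) *
    ((δ n) ^ n)⁻¹ * ((v n * δ n * (v n)⁻¹) ^ n)⁻¹ =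
    (u n * δ n * (u n)⁻¹) ^ n * (δ n) ^ n * (u n * δ n * (u n)⁻¹) *
    ((δ n) ^ n)⁻¹ * ((u n * δ n * (u n)⁻¹) ^ n)⁻¹ := by
  rw [x0n, x2n, ← JD]
  calc J n E1 * J n D1 * (v n * δ n * (v n)⁻¹) * (J n D1)⁻¹ * (J n E1)⁻¹
      = (J n E1 * J n D1 * v n) * δ n * (J n E1 * J n D1 * v n)⁻¹ := by
        simp only [_root_.mul_inv_rev, mul_assoc]
    _ = J n (E1 * D1 ^ 2 * E1) * δ n * (J n (E1 * D1 ^ 2 * E1))⁻¹ := by rw [hYf]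
    _ = (J n (B1 * D1 ^ 2 * B1) * ζ n) * δ n * (J n (B1 * D1 ^ 2 * B1) * ζ n)⁻¹ := by rw [hXz]
    _ = J n (B1 * D1 ^ 2 * B1) * (ζ n * δ n * (ζ n)⁻¹) * (J n (B1 * D1 ^ 2 * B1))⁻¹ := by
        simp only [_root_.mul_inv_rev, mul_assoc]
    _ = J n (B1 * D1 ^ 2 * B1) * δ n * (J n (B1 * D1 ^ 2 * B1))⁻¹ := by rw [hcommζ]
    _ = (J n B1 * J n D1 * u n) * δ n * (J n B1 * J n D1 * u n)⁻¹ := by rw [hXf]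
    _ = J n B1 * J n D1 * (u n * δ n * (u n)⁻¹) * (J n D1)⁻¹ * (J n B1)⁻¹ := by
        simp only [_root_.mul_inv_rev, mul_assoc]

def Φ : GnSK n →* Hp n :=
  PresentedGroup.toGroup
    (f := ![u n * δ n * (u n)⁻¹, δ n, v n * δ n * (v n)⁻¹])
    (by
      intro r hr
      simp only [GnSKRels, Set.mem_insert_iff, Set.mem_singleton_iff] at hr
      rcases hr with rfl | rfl | rfl <;>
      · simp only [_root_.map_mul, _root_.map_inv, map_pow, FreeGroup.lift_apply_of,
          Matrix.cons_val_zero, Matrix.cons_val_one, Matrix.head_cons, Matrix.cons_val_two,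
          Matrix.tail_cons, mul_inv_eq_one]
        first
        | exact main1 n
        | exact main2 n
        | exact main3 n)

lemma Φb : Φ n (bb n) = u n * δ n * (u n)⁻¹ := PresentedGroup.toGroup.of _
lemma Φd : Φ n (dd n) = δ n := PresentedGroup.toGroup.of _
lemma Φe : Φ n (ee n) = v n * δ n * (v n)⁻¹ := PresentedGroup.toGroup.of _

lemma Φbn : Φ n (bb n ^ n) = J n B1 := by rw [map_pow, Φb, x0n]
lemma Φdn : Φ n (dd n ^ n) = J n D1 := by rw [map_pow, Φd, JD]
lemma Φen : Φ n (ee n ^ n) = J n E1 := by rw [map_pow, Φe, x2n]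

lemma Φz : Φ n (zGn (n := n)) = ζ n := by
  simp only [zGn, _root_.map_mul, _root_.map_inv, map_pow, Φb, Φd, Φe]
  rw [x0n, x2n, ← JD, ← Jz, show ((J n D1) ^ 2 : Hp n) = J n (D1 ^ 2) from (map_pow _ _ _).symm]
  simp only [← _root_.map_inv, ← _root_.map_mul]
  exact congrArg (J n) rfl

/-! ## the two composites are the identity -/

lemma ΨΦ : (Ψ n).comp (Φ n) = MonoidHom.id (GnSK n) := by
  apply PresentedGroup.ext
  intro x
  fin_cases x
  · show Ψ n (Φ n (bb n)) = bb n
    rw [Φb, _root_.map_mul, _root_.map_mul, _root_.map_inv, Ψδ, u, ΨJ, _root_.map_mul, θD, θB]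
    exact conjB
  · show Ψ n (Φ n (dd n)) = dd n
    rw [Φd, Ψδ]
  · show Ψ n (Φ n (ee n)) = ee n
    rw [Φe, _root_.map_mul, _root_.map_mul, _root_.map_inv, Ψδ, v, ΨJ, _root_.map_mul, θD, θE]
    exact conjE

lemma ΦΨ : (Φ n).comp (Ψ n) = MonoidHom.id (Hp n) := by
  apply PushoutI.hom_ext_nonempty
  intro i
  match i with
  | false =>
    apply PresentedGroup.ext
    intro x
    fin_cases x
    · show Φ n (Ψ n (J n B1)) = J n B1
      rw [ΨJ, θB, Φbn]
    · show Φ n (Ψ n (J n D1)) = J n D1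
      rw [ΨJ, θD, Φdn]
    · show Φ n (Ψ n (J n E1)) = J n E1
      rw [ΨJ, θE, Φen]
  | true =>
    refine MonoidHom.ext fun (p : K) => ?_
    show Φ n (Ψ n (T n p)) = T n p
    rw [ΨT]
    show Φ n (dd n ^ (p.toAdd.1) * zGn (n := n) ^ (p.toAdd.2)) = T n p
    rw [_root_.map_mul, map_zpow, map_zpow, Φd, Φz]
    show T n (Multiplicative.ofAdd (1, 0)) ^ (p.toAdd.1) *
      T n (Multiplicative.ofAdd (0, 1)) ^ (p.toAdd.2) = T n p
    rw [← map_zpow (T n), ← map_zpow (T n), ← _root_.map_mul]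
    congr 1
    rw [← ofAdd_zsmul, ← ofAdd_zsmul, ← ofAdd_add, ← ofAdd_toAdd p]
    congr 1
    simp [Prod.ext_iff]

lemma Ψinj : Function.Injective (Ψ n) := by
  intro a b hab
  calc a = (Φ n).comp (Ψ n) a := by rw [ΦΨ]; rfl
    _ = (Φ n).comp (Ψ n) b := by simp only [MonoidHom.comp_apply, hab]
    _ = b := by rw [ΦΨ]; rfl

lemma Jinj (hn : 0 < n) : Function.Injective (J n) :=
  PushoutI.of_injective
    (fun i => match i with
      | false => φf_inj
      | true => φt_inj n hn) false

lemma θinj (hn : 0 < n) : Function.Injective (θ n) := by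
  intro a b hab
  apply Jinj n hn
  apply Ψinj n
  rw [ΨJ, ΨJ, hab]

end SKAux

open SKAux in
theorem stmt_17 (n : ℕ) (hn : 0 < n) :
    (∃ φ : G1SK →* GnSK n, Function.Injective φ ∧
      φ (PresentedGroup.of 0) = (PresentedGroup.of 0 : GnSK n) ^ n ∧
      φ (PresentedGroup.of 1) = (PresentedGroup.of 1 : GnSK n) ^ n ∧
      φ (PresentedGroup.of 2) = (PresentedGroup.of 2 : GnSK n) ^ n) ∧
    Nonempty (G1SK ≃* (Subgroup.closure
      ({(PresentedGroup.of 0 : GnSK n) ^ n, (PresentedGroup.of 1 : GnSK n) ^ n,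
        (PresentedGroup.of 2 : GnSK n) ^ n} : Set (GnSK n)))) := by
  have hrange : (θ n).range = Subgroup.closure
      ({(PresentedGroup.of 0 : GnSK n) ^ n, (PresentedGroup.of 1 : GnSK n) ^ n,
        (PresentedGroup.of 2 : GnSK n) ^ n} : Set (GnSK n)) := by
    rw [MonoidHom.range_eq_map, ← PresentedGroup.closure_range_of G1SKRels,
      MonoidHom.map_closure]
    congr 1
    ext g
    constructor
    · rintro ⟨_, ⟨x, rfl⟩, rfl⟩
      fin_cases x
      · exact Or.inl (θB n)
      · exact Or.inr (Or.inl (θD n))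
      · exact Or.inr (Or.inr (θE n))
    · rintro (rfl | rfl | rfl)
      · exact ⟨B1, ⟨0, rfl⟩, θB n⟩
      · exact ⟨D1, ⟨1, rfl⟩, θD n⟩
      · exact ⟨E1, ⟨2, rfl⟩, θE n⟩
  constructor
  · exact ⟨θ n, θinj n hn, θB n, θD n, θE n⟩
  · exact ⟨(MonoidHom.ofInjective (θinj n hn)).trans (MulEquiv.subgroupCongr hrange)⟩
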